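/- The geodesic segment between any two distinct points of S is unique; that is, S satisfies condition (1) in the definition of a real tree. -/
import Mathlib


open Set Filter

noncomputable section

/-- The space `S`: continuous real functions on `[0, ρ]` with `f 0 = 0`.
The function is recorded as a map on all of `ℝ` which is constant in the
clamped variable, so that elements are determined by their values on `[0, ρ]`. -/
structure Sp where
  ρ : ℝ
  toFun : ℝ → ℝ
  ρ_nonneg : 0 ≤ ρ
  contOn : ContinuousOn toFun (Set.Icc 0 ρ)
  zero_at_zero : toFun 0 = 0
  eq_clamp : ∀ t, toFun t = toFun (max 0 (min t ρ))

/-- The moment of segregation of two elements of `S`. -/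
noncomputable def seg (f1 f2 : Sp) : ℝ :=
  sSup {t | t ≤ min f1.ρ f2.ρ ∧ ∀ t' ∈ Set.Ico (0:ℝ) t, f1.toFun t' = f2.toFun t'}

/-- The metric on `S`: `d_S(f1, f2) = (ρ1 - s) + (ρ2 - s)`. -/
noncomputable def dS (f1 f2 : Sp) : ℝ := (f1.ρ - seg f1 f2) + (f2.ρ - seg f1 f2)

/-- A geodesic segment in `S` from `a` to `b`. -/
def IsGeodesicS (g : ℝ → Sp) (a b : Sp) : Prop :=
  g 0 = a ∧ g (dS a b) = b ∧
  ∀ x ∈ Set.Icc 0 (dS a b), ∀ y ∈ Set.Icc 0 (dS a b), dS (g x) (g y) = |x - y|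

/- ### Auxiliary lemmas -/

lemma zero_mem_segSet (f1 f2 : Sp) :
    (0:ℝ) ∈ {t | t ≤ min f1.ρ f2.ρ ∧ ∀ t' ∈ Set.Ico (0:ℝ) t, f1.toFun t' = f2.toFun t'} :=
  ⟨le_min f1.ρ_nonneg f2.ρ_nonneg, fun t' ht' => absurd ht'.2 (not_lt.mpr ht'.1)⟩

lemma bddAbove_segSet (f1 f2 : Sp) :
    BddAbove {t | t ≤ min f1.ρ f2.ρ ∧ ∀ t' ∈ Set.Ico (0:ℝ) t, f1.toFun t' = f2.toFun t'} :=
  ⟨min f1.ρ f2.ρ, fun _ ht => ht.1⟩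

lemma seg_nonneg (f1 f2 : Sp) : 0 ≤ seg f1 f2 :=
  le_csSup (bddAbove_segSet f1 f2) (zero_mem_segSet f1 f2)

lemma seg_le_min (f1 f2 : Sp) : seg f1 f2 ≤ min f1.ρ f2.ρ :=
  csSup_le ⟨0, zero_mem_segSet f1 f2⟩ (fun _ ht => ht.1)

lemma le_seg (f1 f2 : Sp) {u : ℝ} (hu : u ≤ min f1.ρ f2.ρ)
    (h : ∀ t' ∈ Set.Ico (0:ℝ) u, f1.toFun t' = f2.toFun t') : u ≤ seg f1 f2 :=
  le_csSup (bddAbove_segSet f1 f2) ⟨hu, h⟩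

lemma eq_of_lt_seg (f1 f2 : Sp) {t : ℝ} (h0 : 0 ≤ t) (ht : t < seg f1 f2) :
    f1.toFun t = f2.toFun t := by
  obtain ⟨u, hu, htu⟩ := exists_lt_of_lt_csSup ⟨0, zero_mem_segSet f1 f2⟩ ht
  exact hu.2 t ⟨h0, htu⟩

lemma eq_of_le_seg (f1 f2 : Sp) {t : ℝ} (h0 : 0 ≤ t) (ht : t ≤ seg f1 f2) :
    f1.toFun t = f2.toFun t := by
  rcases ht.lt_or_eq with h | h
  · exact eq_of_lt_seg f1 f2 h0 h
  · -- t = seg f1 f2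
    rcases h0.lt_or_eq with hpos | hzero
    · -- 0 < t = s; take the limit from the left
      have hs1 : t ≤ f1.ρ := le_trans ht (le_trans (seg_le_min f1 f2) (min_le_left _ _))
      have hs2 : t ≤ f2.ρ := le_trans ht (le_trans (seg_le_min f1 f2) (min_le_right _ _))
      have hsub1 : Set.Ico (0:ℝ) t ⊆ Set.Icc 0 f1.ρ := fun u hu =>
        ⟨hu.1, le_trans hu.2.le hs1⟩
      have hsub2 : Set.Ico (0:ℝ) t ⊆ Set.Icc 0 f2.ρ := fun u hu =>
        ⟨hu.1, le_trans hu.2.le hs2⟩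
      have hmem : t ∈ closure (Set.Ico (0:ℝ) t) := by
        rw [closure_Ico (ne_of_lt hpos)]
        exact ⟨h0, le_rfl⟩
      have hne : (nhdsWithin t (Set.Ico (0:ℝ) t)).NeBot :=
        mem_closure_iff_nhdsWithin_neBot.mp hmem
      have h1 : Filter.Tendsto f1.toFun (nhdsWithin t (Set.Ico (0:ℝ) t)) (nhds (f1.toFun t)) :=
        ((f1.contOn t ⟨h0, hs1⟩).mono hsub1).tendsto
      have h2 : Filter.Tendsto f2.toFun (nhdsWithin t (Set.Ico (0:ℝ) t)) (nhds (f2.toFun t)) :=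
        ((f2.contOn t ⟨h0, hs2⟩).mono hsub2).tendsto
      have heq : f1.toFun =ᶠ[nhdsWithin t (Set.Ico (0:ℝ) t)] f2.toFun := by
        filter_upwards [eventually_mem_nhdsWithin] with u hu
        exact eq_of_lt_seg f1 f2 hu.1 (lt_of_lt_of_le hu.2 ht)
      exact tendsto_nhds_unique (h1.congr' heq) h2
    · rw [← hzero, f1.zero_at_zero, f2.zero_at_zero]

lemma seg_comm (f1 f2 : Sp) : seg f1 f2 = seg f2 f1 := by
  unfold seg
  congr 1
  ext t
  constructor
  · rintro ⟨h1, h2⟩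
    exact ⟨by rwa [min_comm], fun t' ht' => (h2 t' ht').symm⟩
  · rintro ⟨h1, h2⟩
    exact ⟨by rwa [min_comm], fun t' ht' => (h2 t' ht').symm⟩

lemma dS_comm (f1 f2 : Sp) : dS f1 f2 = dS f2 f1 := by
  unfold dS; rw [seg_comm]; ring

lemma Sp.ext' {f1 f2 : Sp} (hρ : f1.ρ = f2.ρ)
    (h : ∀ t ∈ Set.Icc (0:ℝ) f1.ρ, f1.toFun t = f2.toFun t) : f1 = f2 := by
  have hfun : f1.toFun = f2.toFun := by
    funext t
    rw [f1.eq_clamp t, f2.eq_clamp t, ← hρ]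
    exact h _ ⟨le_max_left _ _, max_le f1.ρ_nonneg (min_le_right _ _)⟩
  cases f1; cases f2
  simp_all

/- ### Truncation -/

/-- Truncation of `f` to `[0, r]` (with `r` clamped to `[0, f.ρ]`). -/
noncomputable def trunc (f : Sp) (r : ℝ) : Sp where
  ρ := max 0 (min r f.ρ)
  toFun := fun t => f.toFun (max 0 (min t (max 0 (min r f.ρ))))
  ρ_nonneg := le_max_left _ _
  contOn := by
    apply f.contOn.comp
    · exact (continuous_const.max (continuous_id.min continuous_const)).continuousOn
    · intro t _
      exact ⟨le_max_left _ _,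
        max_le f.ρ_nonneg ((min_le_right _ _).trans (max_le f.ρ_nonneg (min_le_right _ _)))⟩
  zero_at_zero := by
    show f.toFun (max 0 (min 0 (max 0 (min r f.ρ)))) = 0
    rw [min_eq_left (le_max_left _ _), max_self, f.zero_at_zero]
  eq_clamp := by
    intro t
    show f.toFun (max 0 (min t (max 0 (min r f.ρ)))) =
      f.toFun (max 0 (min (max 0 (min t (max 0 (min r f.ρ)))) (max 0 (min r f.ρ))))
    have h1 : max 0 (min t (max 0 (min r f.ρ))) ≤ max 0 (min r f.ρ) :=
      max_le (le_max_left _ _) (min_le_right _ _)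
    rw [min_eq_left h1, max_eq_right (le_max_left _ _)]

lemma trunc_ρ (f : Sp) {r : ℝ} (h0 : 0 ≤ r) (hr : r ≤ f.ρ) : (trunc f r).ρ = r := by
  simp [trunc, min_eq_left hr, max_eq_right h0]

lemma trunc_toFun (f : Sp) {r : ℝ} (h0 : 0 ≤ r) (hr : r ≤ f.ρ) {t : ℝ}
    (ht : t ∈ Set.Icc 0 r) : (trunc f r).toFun t = f.toFun t := by
  simp only [trunc]
  rw [min_eq_left hr, max_eq_right h0, min_eq_left ht.2, max_eq_right ht.1]

lemma trunc_self (f : Sp) : trunc f f.ρ = f := by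
  refine Sp.ext' (trunc_ρ f f.ρ_nonneg le_rfl) ?_
  rw [trunc_ρ f f.ρ_nonneg le_rfl]
  intro t ht
  exact trunc_toFun f f.ρ_nonneg le_rfl ht

lemma seg_trunc_same (f : Sp) {a b : ℝ} (ha0 : 0 ≤ a) (ha : a ≤ f.ρ)
    (hb0 : 0 ≤ b) (hb : b ≤ f.ρ) : seg (trunc f a) (trunc f b) = min a b := by
  refine le_antisymm ?_ ?_
  · have := seg_le_min (trunc f a) (trunc f b)
    rwa [trunc_ρ f ha0 ha, trunc_ρ f hb0 hb] at this
  · refine le_seg _ _ ?_ ?_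
    · rw [trunc_ρ f ha0 ha, trunc_ρ f hb0 hb]
    · intro t ht
      rw [trunc_toFun f ha0 ha ⟨ht.1, le_trans ht.2.le (min_le_left _ _)⟩,
        trunc_toFun f hb0 hb ⟨ht.1, le_trans ht.2.le (min_le_right _ _)⟩]

lemma seg_trunc_cross (f1 f2 : Sp) {a b : ℝ} (ha : seg f1 f2 ≤ a) (ha' : a ≤ f1.ρ)
    (hb : seg f1 f2 ≤ b) (hb' : b ≤ f2.ρ) :
    seg (trunc f1 a) (trunc f2 b) = seg f1 f2 := by
  have ha0 : (0:ℝ) ≤ a := le_trans (seg_nonneg f1 f2) ha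
  have hb0 : (0:ℝ) ≤ b := le_trans (seg_nonneg f1 f2) hb
  refine le_antisymm ?_ ?_
  · refine le_seg f1 f2 ?_ ?_
    · have := seg_le_min (trunc f1 a) (trunc f2 b)
      rw [trunc_ρ f1 ha0 ha', trunc_ρ f2 hb0 hb'] at this
      exact le_trans this (le_min (le_trans (min_le_left _ _) ha')
        (le_trans (min_le_right _ _) hb'))
    · intro t ht
      have hta : t ≤ a := lt_of_lt_of_le ht.2
        (le_trans (seg_le_min _ _) (by rw [trunc_ρ f1 ha0 ha']; exact min_le_left _ _)) |>.le
      have htb : t ≤ b := lt_of_lt_of_le ht.2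
        (le_trans (seg_le_min _ _) (by rw [trunc_ρ f2 hb0 hb']; exact min_le_right _ _)) |>.le
      have := eq_of_lt_seg (trunc f1 a) (trunc f2 b) ht.1 ht.2
      rwa [trunc_toFun f1 ha0 ha' ⟨ht.1, hta⟩, trunc_toFun f2 hb0 hb' ⟨ht.1, htb⟩] at this
  · refine le_seg _ _ ?_ ?_
    · rw [trunc_ρ f1 ha0 ha', trunc_ρ f2 hb0 hb']
      exact le_min ha hb
    · intro t ht
      rw [trunc_toFun f1 ha0 ha' ⟨ht.1, le_trans ht.2.le ha⟩,
        trunc_toFun f2 hb0 hb' ⟨ht.1, le_trans ht.2.le hb⟩]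
      exact eq_of_lt_seg f1 f2 ht.1 ht.2

lemma dS_trunc_same (f : Sp) {a b : ℝ} (ha0 : 0 ≤ a) (ha : a ≤ f.ρ)
    (hb0 : 0 ≤ b) (hb : b ≤ f.ρ) : dS (trunc f a) (trunc f b) = |a - b| := by
  unfold dS
  rw [seg_trunc_same f ha0 ha hb0 hb, trunc_ρ f ha0 ha, trunc_ρ f hb0 hb]
  rcases le_total a b with h | h
  · rw [min_eq_left h, abs_of_nonpos (by linarith)]; ring
  · rw [min_eq_right h, abs_of_nonneg (by linarith)]; ring

lemma dS_trunc_cross (f1 f2 : Sp) {a b : ℝ} (ha : seg f1 f2 ≤ a) (ha' : a ≤ f1.ρ)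
    (hb : seg f1 f2 ≤ b) (hb' : b ≤ f2.ρ) :
    dS (trunc f1 a) (trunc f2 b) = (a - seg f1 f2) + (b - seg f1 f2) := by
  have ha0 : (0:ℝ) ≤ a := le_trans (seg_nonneg f1 f2) ha
  have hb0 : (0:ℝ) ≤ b := le_trans (seg_nonneg f1 f2) hb
  unfold dS
  rw [seg_trunc_cross f1 f2 ha ha' hb hb', trunc_ρ f1 ha0 ha', trunc_ρ f2 hb0 hb']

/-- The canonical geodesic from `f1` to `f2`. -/
noncomputable def gd (f1 f2 : Sp) (x : ℝ) : Sp :=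
  if x ≤ f1.ρ - seg f1 f2 then trunc f1 (f1.ρ - x)
  else trunc f2 (x + 2 * seg f1 f2 - f1.ρ)
lemma dS_nonneg' (f1 f2 : Sp) : 0 ≤ dS f1 f2 := by
  have h := seg_le_min f1 f2
  have h1 := le_trans h (min_le_left f1.ρ f2.ρ)
  have h2 := le_trans h (min_le_right f1.ρ f2.ρ)
  unfold dS
  linarith

lemma gd_isGeodesic (f1 f2 : Sp) : IsGeodesicS (gd f1 f2) f1 f2 := by
  have hs0 : 0 ≤ seg f1 f2 := seg_nonneg f1 f2
  have hs1 : seg f1 f2 ≤ f1.ρ := le_trans (seg_le_min f1 f2) (min_le_left _ _)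
  have hs2 : seg f1 f2 ≤ f2.ρ := le_trans (seg_le_min f1 f2) (min_le_right _ _)
  have hd : dS f1 f2 = (f1.ρ - seg f1 f2) + (f2.ρ - seg f1 f2) := rfl
  refine ⟨?_, ?_, ?_⟩
  · -- gd f1 f2 0 = f1
    simp only [gd]
    rw [if_pos (by linarith), show f1.ρ - 0 = f1.ρ by ring]
    exact trunc_self f1
  · -- gd f1 f2 d = f2
    by_cases hcase : dS f1 f2 ≤ f1.ρ - seg f1 f2
    · -- then ρ2 = seg and f2 = trunc f1 (seg f1 f2)
      have hρ2 : f2.ρ = seg f1 f2 := le_antisymm (by rw [hd] at hcase; linarith) hs2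
      simp only [gd]
      rw [if_pos hcase, show f1.ρ - dS f1 f2 = seg f1 f2 by rw [hd]; linarith]
      refine (Sp.ext' (by rw [trunc_ρ f1 hs0 hs1, hρ2]) ?_).symm
      intro t ht
      rw [hρ2] at ht
      rw [trunc_toFun f1 hs0 hs1 ht]
      exact (eq_of_le_seg f1 f2 ht.1 ht.2).symm
    · simp only [gd]
      rw [if_neg hcase, show dS f1 f2 + 2 * seg f1 f2 - f1.ρ = f2.ρ by rw [hd]; ring]
      exact trunc_self f2
  · -- distances
    have key : ∀ x ∈ Set.Icc 0 (dS f1 f2), ∀ y ∈ Set.Icc 0 (dS f1 f2),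
        x ≤ y → dS (gd f1 f2 x) (gd f1 f2 y) = |x - y| := by
      intro x hx y hy hxy
      have hx0 : 0 ≤ x := hx.1
      have hxd : x ≤ (f1.ρ - seg f1 f2) + (f2.ρ - seg f1 f2) := hd ▸ hx.2
      have hy0 : 0 ≤ y := hy.1
      have hyd : y ≤ (f1.ρ - seg f1 f2) + (f2.ρ - seg f1 f2) := hd ▸ hy.2
      by_cases hx1 : x ≤ f1.ρ - seg f1 f2
      · by_cases hy1 : y ≤ f1.ρ - seg f1 f2
        · simp only [gd]
          rw [if_pos hx1, if_pos hy1,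
            dS_trunc_same f1 (by linarith) (by linarith) (by linarith) (by linarith),
            show f1.ρ - x - (f1.ρ - y) = -(x - y) by ring, abs_neg]
        · push_neg at hy1
          simp only [gd]
          rw [if_pos hx1, if_neg (not_le.mpr hy1),
            dS_trunc_cross f1 f2 (by linarith) (by linarith) (by linarith) (by linarith),
            abs_of_nonpos (by linarith : x - y ≤ 0)]
          ring
      · push_neg at hx1
        have hy1 : f1.ρ - seg f1 f2 < y := lt_of_lt_of_le hx1 hxy
        simp only [gd]
        rw [if_neg (not_le.mpr hx1), if_neg (not_le.mpr hy1),
          dS_trunc_same f2 (by linarith) (by linarith) (by linarith) (by linarith),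
          show x + 2 * seg f1 f2 - f1.ρ - (y + 2 * seg f1 f2 - f1.ρ) = x - y by ring]
    intro x hx y hy
    rcases le_total x y with h | h
    · exact key x hx y hy h
    · rw [dS_comm, abs_sub_comm]
      exact key y hy x hx h

lemma point_unique (f1 f2 h : Sp) (x : ℝ)
    (h1 : dS f1 h = x) (h2 : dS h f2 = dS f1 f2 - x) : h = gd f1 f2 x := by
  have hs0 : 0 ≤ seg f1 f2 := seg_nonneg f1 f2
  have hsρ1 : seg f1 f2 ≤ f1.ρ := le_trans (seg_le_min f1 f2) (min_le_left _ _)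
  have hsρ2 : seg f1 f2 ≤ f2.ρ := le_trans (seg_le_min f1 f2) (min_le_right _ _)
  have hs10 : 0 ≤ seg f1 h := seg_nonneg f1 h
  have hs20 : 0 ≤ seg h f2 := seg_nonneg h f2
  have hs1ρ1 : seg f1 h ≤ f1.ρ := le_trans (seg_le_min f1 h) (min_le_left _ _)
  have hs1ρh : seg f1 h ≤ h.ρ := le_trans (seg_le_min f1 h) (min_le_right _ _)
  have hs2ρh : seg h f2 ≤ h.ρ := le_trans (seg_le_min h f2) (min_le_left _ _)
  have hs2ρ2 : seg h f2 ≤ f2.ρ := le_trans (seg_le_min h f2) (min_le_right _ _)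
  have e1 : (f1.ρ - seg f1 h) + (h.ρ - seg f1 h) = x := h1
  have e2 : (h.ρ - seg h f2) + (f2.ρ - seg h f2)
      = ((f1.ρ - seg f1 f2) + (f2.ρ - seg f1 f2)) - x := h2
  have hρh : h.ρ = seg f1 h + seg h f2 - seg f1 f2 := by linarith
  have hss1 : seg f1 f2 ≤ seg f1 h := by linarith
  have hss2 : seg f1 f2 ≤ seg h f2 := by linarith
  have hmin : min (seg f1 h) (seg h f2) ≤ seg f1 f2 := by
    refine le_seg f1 f2 (le_min (le_trans (min_le_left _ _) hs1ρ1)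
      (le_trans (min_le_right _ _) hs2ρ2)) ?_
    intro t ht
    have ha : f1.toFun t = h.toFun t :=
      eq_of_lt_seg f1 h ht.1 (lt_of_lt_of_le ht.2 (min_le_left _ _))
    have hb : h.toFun t = f2.toFun t :=
      eq_of_lt_seg h f2 ht.1 (lt_of_lt_of_le ht.2 (min_le_right _ _))
    exact ha.trans hb
  have hcase : seg f1 h = seg f1 f2 ∨ seg h f2 = seg f1 f2 := by
    rcases le_total (seg f1 h) (seg h f2) with hc | hc
    · left; rw [min_eq_left hc] at hmin; linarith
    · right; rw [min_eq_right hc] at hmin; linarith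
  rcases hcase with hc | hc
  · -- seg f1 h = seg f1 f2, h.ρ = seg h f2, h is a truncation of f2
    have hρh2 : h.ρ = seg h f2 := by rw [hρh, hc]; ring
    have hxval : x = f1.ρ - seg f1 f2 + (seg h f2 - seg f1 f2) := by
      rw [← e1, hc, hρh2]
    by_cases hbr : x ≤ f1.ρ - seg f1 f2
    · -- then seg h f2 = seg f1 f2, x = ρ1 - s, h = trunc f1 s
      have hs2eq : seg h f2 = seg f1 f2 := le_antisymm (by linarith) hss2
      have hxeq : x = f1.ρ - seg f1 f2 := by rw [hxval, hs2eq]; ring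
      simp only [gd]
      rw [if_pos hbr, hxeq, show f1.ρ - (f1.ρ - seg f1 f2) = seg f1 f2 by ring]
      refine Sp.ext' (by rw [trunc_ρ f1 hs0 hsρ1, hρh2, hs2eq]) ?_
      intro t ht
      rw [hρh2, hs2eq] at ht
      rw [trunc_toFun f1 hs0 hsρ1 ht]
      exact (eq_of_le_seg f1 h ht.1 (by rw [← hc] at ht; exact ht.2)).symm
    · simp only [gd]
      rw [if_neg hbr, show x + 2 * seg f1 f2 - f1.ρ = seg h f2 by rw [hxval]; ring]
      refine Sp.ext' (by rw [trunc_ρ f2 hs20 hs2ρ2, hρh2]) ?_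
      intro t ht
      rw [hρh2] at ht
      rw [trunc_toFun f2 hs20 hs2ρ2 ht]
      exact eq_of_le_seg h f2 ht.1 ht.2
  · -- seg h f2 = seg f1 f2, h.ρ = seg f1 h, h is a truncation of f1
    have hρh1 : h.ρ = seg f1 h := by rw [hρh, hc]; ring
    have hs1val : seg f1 h = f1.ρ - x := by
      rw [hc, hρh1] at e2; linarith
    have hbr : x ≤ f1.ρ - seg f1 f2 := by linarith
    simp only [gd]
    rw [if_pos hbr, ← hs1val]
    refine Sp.ext' (by rw [trunc_ρ f1 hs10 hs1ρ1, hρh1]) ?_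
    intro t ht
    rw [hρh1] at ht
    rw [trunc_toFun f1 hs10 hs1ρ1 ht]
    exact (eq_of_le_seg f1 h ht.1 ht.2).symm
/-- between any two distinct points of `S` there is a geodesic
segment, and it is unique; i.e. `S` satisfies condition (1) of the definition
of a real tree. -/
theorem geodesic_unique (f1 f2 : Sp) (hne : f1 ≠ f2) :
    (∃ g : ℝ → Sp, IsGeodesicS g f1 f2) ∧
    (∀ g1 g2 : ℝ → Sp, IsGeodesicS g1 f1 f2 → IsGeodesicS g2 f1 f2 →
      ∀ x ∈ Set.Icc 0 (dS f1 f2), g1 x = g2 x) := by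
  refine ⟨⟨gd f1 f2, gd_isGeodesic f1 f2⟩, ?_⟩
  intro g1 g2 hg1 hg2 x hx
  have hd0 : 0 ≤ dS f1 f2 := dS_nonneg' f1 f2
  have h0mem : (0:ℝ) ∈ Set.Icc 0 (dS f1 f2) := ⟨le_rfl, hd0⟩
  have hdmem : dS f1 f2 ∈ Set.Icc 0 (dS f1 f2) := ⟨hd0, le_rfl⟩
  have claim : ∀ g : ℝ → Sp, IsGeodesicS g f1 f2 → g x = gd f1 f2 x := by
    intro g hg
    obtain ⟨hg0, hgd, hgdist⟩ := hg
    refine point_unique f1 f2 (g x) x ?_ ?_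
    · have := hgdist 0 h0mem x hx
      rw [hg0] at this
      rw [this, abs_of_nonpos (by linarith [hx.1])]
      ring
    · have := hgdist x hx (dS f1 f2) hdmem
      rw [hgd] at this
      rw [this, abs_of_nonpos (by linarith [hx.2])]
      ring
  rw [claim g1 hg1, claim g2 hg2]
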